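/- Let G be an undirected graph having a connected component that is neither trivial (a single vertex with no loop), nor a complete graph with loops on all its vertices, nor a complete bipartite graph. Then the graph algebra A(G) satisfies no nontrivial bracketing identity; consequently, s_n(A(G)) = C_{n−1} for all n ≥ 1, where C_k denotes the k-th Catalan number C_k = binom(2k,k)/(k+1). -/

import Mathlib

/-!
Evaluating a bracketing `t` at `x_j ↦ g j` in the graph algebra gives `g 0` when `g` is a
homomorphism from the DFS tree of `t` into `G`, and `∞` otherwise. To separate two bracketings
of the same size it therefore suffices to find a map that is a homomorphism for one DFS tree but
not for the other. Colour each vertex by the vertex at its depth along an infinite walk `c`; at the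
first vertex `x_i` whose depths `D ≠ D'` in the two trees differ, recolour the subtree of `x_i` in
the first tree along a second walk, starting at a vertex adjacent to `c (D - 1)` but not to
`c (D' - 1)`. Such walks exist because the bad component contains walks `z — a — b` and
`z — a — x — b` with `z` and `b` non-adjacent: otherwise it would be trivial, complete with loops,
or complete bipartite. Hence distinct bracketings induce distinct term operations, and there are
`C_{n-1}` bracketings of size `n`.
-/

namespace AssocSpec

/-- Bracketings of products `x₁ x₂ ⋯ xₙ` represented as binary trees whose
leaves, read from left to right, are the variables `x₁, …, xₙ`. -/
inductive BTree : Type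
  | leaf : BTree
  | node : BTree → BTree → BTree

namespace BTree

/-- The size of a bracketing: its number of variables (leaves). -/
def size : BTree → ℕ
  | leaf => 1
  | node l r => l.size + r.size

/-- Evaluate a bracketing in a magma `(A, op)`, the leaves taking the values
`f k, f (k+1), …` from left to right. -/
def evalFrom {A : Type*} (op : A → A → A) : BTree → (ℕ → A) → ℕ → A
  | leaf, f, k => f k
  | node l r, f, k => op (evalFrom op l f k) (evalFrom op r f (k + l.size))

/-- The term operation induced by a bracketing `t` on a magma `(A, op)`;
the `i`-th variable (0-indexed) takes the value `f i`. -/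
def termOp {A : Type*} (op : A → A → A) (t : BTree) (f : ℕ → A) : A :=
  evalFrom op t f 0

/-- The depth sequence of the DFS tree `G(t)` of a bracketing `t`: the `i`-th
entry is the depth of the `i`-th variable (0-indexed) in `G(t)`. -/
def depths : BTree → List ℕ
  | leaf => [0]
  | node l r => l.depths ++ r.depths.map (· + 1)

/-- The depth of the `i`-th variable (0-indexed) in the DFS tree `G(t)`. -/
def depth (t : BTree) (i : ℕ) : ℕ := t.depths.getD i 0

/-- The height of the DFS tree `G(t)`: the maximum depth of a variable. -/
def height (t : BTree) : ℕ := t.depths.foldr max 0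

/-- The edges of the DFS tree `G(t)`, the variables being indexed from the
given offset: `(p, c)` is an edge iff `x_p` is the parent of `x_c`. -/
def edgesFrom : BTree → ℕ → List (ℕ × ℕ)
  | leaf, _ => []
  | node l r, k => (k, k + l.size) :: (l.edgesFrom k ++ r.edgesFrom (k + l.size))

/-- The edges of the DFS tree `G(t)` (variables indexed from `0`). -/
def edges (t : BTree) : List (ℕ × ℕ) := t.edgesFrom 0

end BTree

open Classical in
/-- The operation of the graph algebra of the digraph with vertex set `V` and
edge relation `E`; `none` plays the role of `∞`. -/
noncomputable def gaOp {V : Type*} (E : V → V → Prop) :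
    Option V → Option V → Option V
  | some x, some y => if E x y then some x else none
  | _, _ => none

/-- The magma `(A, op)` satisfies the bracketing identity `t ≈ t'`. -/
def Satisfies {A : Type*} (op : A → A → A) (t t' : BTree) : Prop :=
  ∀ f : ℕ → A, BTree.termOp op t f = BTree.termOp op t' f

/-- The `n`-th member `s_n` of the associative spectrum of the magma `(A, op)`:
the number of distinct term operations induced by bracketings of size `n`. -/
noncomputable def spectrum {A : Type*} (op : A → A → A) (n : ℕ) : ℕ :=
  Set.ncard {g : (ℕ → A) → A | ∃ t : BTree, t.size = n ∧ g = BTree.termOp op t}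

/-- Reachability (by a walk) in the digraph with edge relation `E`. -/
def Reach {V : Type*} (E : V → V → Prop) : V → V → Prop :=
  Relation.ReflTransGen E

/-- `u` and `v` lie in the same strongly connected component. -/
def SameSCC {V : Type*} (E : V → V → Prop) (u v : V) : Prop :=
  Reach E u v ∧ Reach E v u

/-- The strongly connected component of `v`, as a set of vertices. -/
def scc {V : Type*} (E : V → V → Prop) (v : V) : Set V :=
  {u | SameSCC E u v}

/-- `v` lies in a nontrivial strongly connected component (one carrying at
least one edge), i.e. `v` lies on a closed walk of positive length. -/
def InNontrivialSCC {V : Type*} (E : V → V → Prop) (v : V) : Prop :=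
  ∃ u, E v u ∧ Reach E u v

/-- The induced subgraph on the set `K` (with the edge relation `E`) is an
`m`-whirl: `K` is partitioned into blocks `B 0, …, B (m-1)` so that edges go
exactly from each block to the cyclically next one. -/
def IsWhirlOn {V : Type*} (E : V → V → Prop) (K : Set V) (m : ℕ) : Prop :=
  ∃ B : ZMod m → Set V,
    (∀ i, (B i).Nonempty) ∧
    (∀ i, B i ⊆ K) ∧
    (∀ x ∈ K, ∃! i, x ∈ B i) ∧
    (∀ x ∈ K, ∀ y ∈ K, (E x y ↔ ∃ i, x ∈ B i ∧ y ∈ B (i + 1)))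

/-- `p 0 → p 1 → ⋯ → p len` is a path (a walk with pairwise distinct
vertices) in the digraph with edge relation `E`. -/
def IsPath {V : Type*} (E : V → V → Prop) (len : ℕ) (p : ℕ → V) : Prop :=
  (∀ i < len, E (p i) (p (i + 1))) ∧
  (∀ i ≤ len, ∀ j ≤ len, p i = p j → i = j)

/-- The walk `p 0 → ⋯ → p len` is pleasant: all its vertices belong to
trivial strongly connected components. -/
def IsPleasant {V : Type*} (E : V → V → Prop) (len : ℕ) (p : ℕ → V) : Prop :=
  ∀ i ≤ len, ¬ InNontrivialSCC E (p i)

/-- The connected component `K` (of an undirected graph) is complete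
bipartite: it splits into two nonempty parts with edges exactly between
vertices of different parts. -/
def IsCompleteBipartiteOn {V : Type*} (E : V → V → Prop) (K : Set V) : Prop :=
  ∃ B1 B2 : Set V, B1.Nonempty ∧ B2.Nonempty ∧ B1 ∪ B2 = K ∧ B1 ∩ B2 = ∅ ∧
    ∀ x ∈ K, ∀ y ∈ K, (E x y ↔ (x ∈ B1 ∧ y ∈ B2) ∨ (x ∈ B2 ∧ y ∈ B1))

/-- A DFS tree of size `n`: a rooted directed tree on the vertices
`x₁, …, xₙ` (here `Fin n`, the root being `0`), given by its parent function,
such that the parent of every non-root vertex precedes it and the vertex set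
of the induced subtree rooted at any vertex `i` is an interval `[i, i']`.
(The parent of the root is, by convention, the root itself.) -/
structure DFSTree (n : ℕ) where
  parent : Fin n → Fin n
  parent_lt : ∀ i : Fin n, 0 < (i : ℕ) → (parent i : ℕ) < (i : ℕ)
  parent_root : ∀ i : Fin n, (i : ℕ) = 0 → parent i = i
  interval : ∀ i j k : Fin n, i ≤ j → j ≤ k →
    (∃ a : ℕ, parent^[a] k = i) → (∃ a : ℕ, parent^[a] j = i)

/-- The depth of the vertex `i` in a DFS tree: the length of the path from
the root to `i`. -/
noncomputable def DFSTree.depth {n : ℕ} (T : DFSTree n) (i : Fin n) : ℕ :=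
  sInf {k : ℕ | (T.parent^[k] i : ℕ) = 0}

/-- The height of a DFS tree: the maximum depth of a vertex. -/
noncomputable def DFSTree.height {n : ℕ} (T : DFSTree n) : ℕ :=
  Finset.univ.sup fun i => T.depth i

/-- The vertex `i` is a leaf (childless vertex) of the DFS tree `T`. -/
def DFSTree.IsLeaf {n : ℕ} (T : DFSTree n) (i : Fin n) : Prop :=
  ∀ j : Fin n, T.parent j = i → j = i

/-- `t_h(n)`: the number of DFS trees of size `n` of height at most `h`. -/
noncomputable def tcount (h n : ℕ) : ℕ :=
  Nat.card {T : DFSTree n // T.height ≤ h}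

/-- `d` is a zag sequence: `d₁ = 0`, `d₂ = 1`, and
`1 ≤ d_{i+1} ≤ d_i + 1` for all `i` (1-indexed as in the paper;
here `d : Fin n → ℕ` is 0-indexed). -/
def IsZag {n : ℕ} (d : Fin n → ℕ) : Prop :=
  (∀ h : 0 < n, d ⟨0, h⟩ = 0) ∧
  (∀ h : 1 < n, d ⟨1, h⟩ = 1) ∧
  (∀ i : ℕ, ∀ h : i + 1 < n,
    1 ≤ d ⟨i + 1, h⟩ ∧ d ⟨i + 1, h⟩ ≤ d ⟨i, Nat.lt_of_succ_lt h⟩ + 1)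

/-- `M(t,t')`: the largest `m` such that the depth sequences of the DFS trees
of the bracketings `t` and `t'` are congruent modulo `m`. -/
noncomputable def Mval (t t' : BTree) : ℕ :=
  sSup {m : ℕ | ∀ i < t.size, t.depth i ≡ t'.depth i [MOD m]}

namespace BTree

@[simp] theorem size_node (l r : BTree) : (node l r).size = l.size + r.size := rfl

theorem size_pos (t : BTree) : 0 < t.size := by
  induction t with
  | leaf => exact Nat.one_pos
  | node l r ihl _ => exact Nat.add_pos_left ihl _

theorem length_depths (t : BTree) : t.depths.length = t.size := by
  induction t with
  | leaf => rfl
  | node l r ihl ihr => simp [depths, ihl, ihr]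

theorem depth_eq_getElem {t : BTree} {j : ℕ} (h : j < t.size) :
    t.depth j = t.depths[j]'(by rwa [length_depths]) :=
  List.getD_eq_getElem _ _ _

theorem depth_node_of_lt {l r : BTree} {j : ℕ} (h : j < l.size) :
    (node l r).depth j = l.depth j :=
  List.getD_append _ _ _ _ (by rwa [length_depths])

theorem depth_node_of_le {l r : BTree} {j : ℕ} (h₁ : l.size ≤ j) (h₂ : j < l.size + r.size) :
    (node l r).depth j = r.depth (j - l.size) + 1 := by
  rw [depth, depths, List.getD_append_right _ _ _ _ (by rwa [length_depths]), length_depths,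
    List.getD_eq_getElem _ _ (by simp [length_depths]; omega), depth_eq_getElem (by omega)]
  simp

@[simp] theorem depth_zero (t : BTree) : t.depth 0 = 0 := by
  induction t with
  | leaf => rfl
  | node l r ihl _ => rw [depth_node_of_lt l.size_pos, ihl]

theorem depth_pos {t : BTree} {j : ℕ} (h₀ : 0 < j) (h : j < t.size) : 0 < t.depth j := by
  induction t generalizing j with
  | leaf => simp [size] at h; omega
  | node l r ihl _ =>
    by_cases hj : j < l.size
    · rw [depth_node_of_lt hj]; exact ihl h₀ hj
    · rw [depth_node_of_le (not_lt.1 hj) h]; omega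

/-- In `node l r`, the vertex `x_{l.size}` is a child of the root, while every later vertex
lies strictly deeper; so the depth sequence determines `l.size`. -/
theorem not_size_lt_of_depths_eq {l r l' r' : BTree} (hs : l.size + r.size = l'.size + r'.size)
    (h : (node l r).depths = (node l' r').depths) : ¬ l.size < l'.size := by
  intro hlt
  have h₁ : (node l r).depth l'.size = (node l' r').depth l'.size := by rw [depth, depth, h]
  have := r'.size_pos
  rw [depth_node_of_le hlt.le (by omega), depth_node_of_le le_rfl (by omega),
    Nat.sub_self, depth_zero] at h₁
  have := depth_pos (t := r) (j := l'.size - l.size) (by omega) (by omega)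
  omega

theorem size_left_eq_of_depths_eq {l r l' r' : BTree}
    (h : (node l r).depths = (node l' r').depths) : l.size = l'.size := by
  have hs : l.size + r.size = l'.size + r'.size := by
    simpa [length_depths] using congrArg List.length h
  exact le_antisymm (not_lt.1 (not_size_lt_of_depths_eq hs.symm h.symm))
    (not_lt.1 (not_size_lt_of_depths_eq hs h))

theorem depths_injective : Function.Injective depths := by
  intro t t' h
  induction t generalizing t' with
  | leaf =>
    cases t' with
    | leaf => rfl
    | node l' r' =>
      have := congrArg List.length h
      simp only [length_depths, size] at this
      have := l'.size_pos; have := r'.size_pos; omega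
  | node l r ihl ihr =>
    cases t' with
    | leaf =>
      have := congrArg List.length h
      simp only [length_depths, size] at this
      have := l.size_pos; have := r.size_pos; omega
    | node l' r' =>
      have hl := size_left_eq_of_depths_eq h
      obtain ⟨hl', hr'⟩ := List.append_inj h (by rw [length_depths, length_depths, hl])
      rw [ihl hl', ihr (List.map_injective_iff.2 (add_left_injective 1) hr')]

theorem exists_min_depth_ne {t t' : BTree} (hs : t.size = t'.size) (hne : t ≠ t') :
    ∃ i, 0 < i ∧ i < t.size ∧ t.depth i ≠ t'.depth i ∧ ∀ j < i, t.depth j = t'.depth j := by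
  classical
  have hex : ∃ i, i < t.size ∧ t.depth i ≠ t'.depth i := by
    by_contra! h
    refine hne (depths_injective (List.ext_getElem (by rw [length_depths, length_depths, hs])
      fun j hj _ => ?_))
    rw [length_depths] at hj
    rw [← depth_eq_getElem hj, ← depth_eq_getElem (hs ▸ hj), h j hj]
  obtain ⟨hit, hne⟩ := Nat.find_spec hex
  refine ⟨Nat.find hex, Nat.pos_of_ne_zero fun h0 => hne (by simp [h0]), hit, hne,
    fun j hj => ?_⟩
  by_contra h
  exact Nat.find_min hex hj ⟨hj.trans hit, h⟩

variable {t : BTree} {i j k a b : ℕ}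

theorem mem_edgesFrom_node {l r : BTree} :
    (a, b) ∈ (node l r).edgesFrom k ↔
      (a = k ∧ b = k + l.size) ∨ (a, b) ∈ l.edgesFrom k ∨ (a, b) ∈ r.edgesFrom (k + l.size) := by
  simp [edgesFrom]

theorem bounds_of_mem_edgesFrom (h : (a, b) ∈ t.edgesFrom k) : k ≤ a ∧ a < b ∧ b < k + t.size := by
  induction t generalizing k with
  | leaf => simp [edgesFrom] at h
  | node l r ihl ihr =>
    have := l.size_pos; have := r.size_pos
    rcases mem_edgesFrom_node.1 h with ⟨rfl, rfl⟩ | h | h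
    · simp; omega
    · have := ihl h; simp; omega
    · have := ihr h; simp; omega

theorem depth_snd_of_mem_edgesFrom (h : (a, b) ∈ t.edgesFrom k) :
    t.depth (b - k) = t.depth (a - k) + 1 := by
  induction t generalizing k with
  | leaf => simp [edgesFrom] at h
  | node l r ihl ihr =>
    have := r.size_pos
    rcases mem_edgesFrom_node.1 h with ⟨rfl, rfl⟩ | h | h
    · rw [Nat.add_sub_cancel_left, Nat.sub_self, depth_node_of_le le_rfl (by omega),
        Nat.sub_self, depth_zero, depth_zero]
    · have := bounds_of_mem_edgesFrom h
      rw [depth_node_of_lt (by omega), depth_node_of_lt (by omega), ihl h]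
    · have := bounds_of_mem_edgesFrom h
      rw [depth_node_of_le (by omega) (by omega), depth_node_of_le (by omega) (by omega),
        Nat.sub_sub, Nat.sub_sub, ihr h]

/-- The vertices strictly between a parent and its child belong to earlier subtrees of the
parent. -/
theorem depth_lt_of_mem_edgesFrom (h : (a, b) ∈ t.edgesFrom k) (ha : a < j)
    (hb : j < b) : t.depth (a - k) < t.depth (j - k) := by
  induction t generalizing k with
  | leaf => simp [edgesFrom] at h
  | node l r ihl ihr =>
    rcases mem_edgesFrom_node.1 h with ⟨rfl, rfl⟩ | h | h
    · rw [Nat.sub_self, depth_zero, depth_node_of_lt (by omega)]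
      exact depth_pos (by omega) (by omega)
    · have := bounds_of_mem_edgesFrom h
      rw [depth_node_of_lt (by omega), depth_node_of_lt (by omega)]
      exact ihl h
    · have := bounds_of_mem_edgesFrom h
      rw [depth_node_of_le (by omega) (by omega), depth_node_of_le (by omega) (by omega),
        Nat.sub_sub, Nat.sub_sub]
      exact Nat.succ_lt_succ (ihr h)

theorem exists_mem_edgesFrom (hk : k < b) (hb : b < k + t.size) : ∃ a, (a, b) ∈ t.edgesFrom k := by
  induction t generalizing k with
  | leaf => simp [size] at hb; omega
  | node l r ihl ihr =>
    simp only [mem_edgesFrom_node]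
    rcases lt_trichotomy b (k + l.size) with h | h | h
    · obtain ⟨a, ha⟩ := ihl hk h
      exact ⟨a, Or.inr (Or.inl ha)⟩
    · exact ⟨k, Or.inl ⟨rfl, h⟩⟩
    · obtain ⟨a, ha⟩ := ihr h (by simp at hb; omega)
      exact ⟨a, Or.inr (Or.inr ha)⟩

theorem depth_snd_of_mem_edges (h : (a, b) ∈ t.edges) : t.depth b = t.depth a + 1 := by
  simpa using depth_snd_of_mem_edgesFrom h

theorem depth_lt_of_mem_edges (h : (a, b) ∈ t.edges) (ha : a < j) (hb : j < b) :
    t.depth a < t.depth j := by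
  simpa using depth_lt_of_mem_edgesFrom h ha hb

/-- `x_j` is a descendant of `x_i` in the DFS tree of `t`: the subtree of `x_i` is the longest
interval starting at `i` whose other vertices lie strictly deeper than `x_i`. -/
def InSubtree (t : BTree) (i j : ℕ) : Prop :=
  i ≤ j ∧ ∀ l, i < l → l ≤ j → t.depth i < t.depth l

theorem inSubtree_self (t : BTree) (i : ℕ) : t.InSubtree i i :=
  ⟨le_rfl, fun _ h h' => absurd h (not_lt.2 h')⟩

theorem InSubtree.depth_le (h : t.InSubtree i j) : t.depth i ≤ t.depth j := by
  rcases h.1.eq_or_lt with rfl | hlt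
  · rfl
  · exact (h.2 j hlt le_rfl).le

theorem InSubtree.snd_of_mem_edges (h : (a, b) ∈ t.edges) (ha : t.InSubtree i a) :
    t.InSubtree i b := by
  have hab := (bounds_of_mem_edgesFrom h).2.1
  have hda := ha.depth_le
  refine ⟨ha.1.trans hab.le, fun l hil hlb => ?_⟩
  rcases le_or_gt l a with hla | hal
  · exact ha.2 l hil hla
  · rcases hlb.eq_or_lt with rfl | hlb
    · have := depth_snd_of_mem_edges h; omega
    · have := depth_lt_of_mem_edges h hal hlb; omega

theorem eq_of_mem_edges_of_inSubtree (h : (a, b) ∈ t.edges) (ha : ¬ t.InSubtree i a)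
    (hb : t.InSubtree i b) : b = i := by
  by_contra hbi
  have hib : i < b := lt_of_le_of_ne hb.1 (Ne.symm hbi)
  have hdb := hb.2 b hib le_rfl
  have hdab := depth_snd_of_mem_edges h
  have hia : i ≤ a := by
    by_contra! hai
    have := depth_lt_of_mem_edges h hai hib
    omega
  exact ha ⟨hia, fun l hil hla => hb.2 l hil (hla.trans (bounds_of_mem_edgesFrom h).2.1.le)⟩

def toBinaryTree : BTree → BinaryTree Unit
  | leaf => .nil
  | node l r => .node () l.toBinaryTree r.toBinaryTree

def ofBinaryTree : BinaryTree Unit → BTree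
  | .nil => leaf
  | .node _ l r => node (ofBinaryTree l) (ofBinaryTree r)

def equivBinaryTree : BTree ≃ BinaryTree Unit where
  toFun := toBinaryTree
  invFun := ofBinaryTree
  left_inv t := by
    induction t with
    | leaf => rfl
    | node l r ihl ihr => simp [toBinaryTree, ofBinaryTree, ihl, ihr]
  right_inv x := by
    induction x with
    | nil => rfl
    | node _ l r ihl ihr => simp [toBinaryTree, ofBinaryTree, ihl, ihr]

theorem numNodes_toBinaryTree (t : BTree) : t.toBinaryTree.numNodes + 1 = t.size := by
  induction t with
  | leaf => rfl
  | node l r ihl ihr => simp only [toBinaryTree, BinaryTree.numNodes, size_node]; omega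

theorem card_size_eq {n : ℕ} (hn : 1 ≤ n) :
    Nat.card {t : BTree // t.size = n} = catalan (n - 1) := by
  rw [← BinaryTree.treesOfNumNodesEq_card_eq_catalan, ← Nat.card_eq_finsetCard]
  refine Nat.card_congr (equivBinaryTree.subtypeEquiv fun t => ?_)
  rw [BinaryTree.mem_treesOfNumNodesEq]
  have := numNodes_toBinaryTree t
  change _ ↔ t.toBinaryTree.numNodes = _
  omega

end BTree

section GraphAlgebra

variable {V : Type*} {E : V → V → Prop}

open BTree

def IsHom (E : V → V → Prop) (g : ℕ → V) (t : BTree) (k : ℕ) : Prop :=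
  ∀ a b, (a, b) ∈ t.edgesFrom k → E (g a) (g b)

theorem isHom_node_iff {g : ℕ → V} {l r : BTree} {k : ℕ} :
    IsHom E g (node l r) k ↔
      E (g k) (g (k + l.size)) ∧ IsHom E g l k ∧ IsHom E g r (k + l.size) := by
  simp only [IsHom, mem_edgesFrom_node]
  grind

open Classical in
theorem evalFrom_gaOp_some (g : ℕ → V) (t : BTree) (k : ℕ) :
    t.evalFrom (gaOp E) (fun j => some (g j)) k = if IsHom E g t k then some (g k) else none := by
  induction t generalizing k with
  | leaf => simp [evalFrom, IsHom, edgesFrom]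
  | node l r ihl ihr =>
    rw [evalFrom, ihl, ihr, isHom_node_iff]
    by_cases hl : IsHom E g l k <;> by_cases hr : IsHom E g r (k + l.size) <;>
      simp [hl, hr, gaOp]

def IsWalk (E : V → V → Prop) (c : ℕ → V) : Prop :=
  ∀ k, E (c k) (c (k + 1))

theorem IsWalk.splice {c d : ℕ → V} (hc : IsWalk E c) (hd : IsWalk E d) {p : ℕ}
    (h : E (c p) (d (p + 1))) : IsWalk E (fun k => if k ≤ p then c k else d k) := by
  intro k
  rcases lt_trichotomy k p with hk | rfl | hk
  · simp [hk.le, Nat.succ_le_of_lt hk, hc k]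
  · simp [h]
  · simp [hk.not_ge, (hk.trans (Nat.lt_succ_self k)).not_ge, hd k]

open Classical in
noncomputable def graft (t : BTree) (i : ℕ) (c c' : ℕ → V) (j : ℕ) : V :=
  if t.InSubtree i j then c' (t.depth j - t.depth i) else c (t.depth j)

theorem isHom_graft {t : BTree} {i p : ℕ} {c c' : ℕ → V} (hc : IsWalk E c) (hc' : IsWalk E c')
    (hp : t.depth i = p + 1) (hlink : E (c p) (c' 0)) : IsHom E (graft t i c c') t 0 := by
  intro a b h
  have hd := depth_snd_of_mem_edges h
  by_cases ha : t.InSubtree i a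
  · rw [graft, graft, if_pos ha, if_pos (ha.snd_of_mem_edges h), hd,
      Nat.sub_add_comm ha.depth_le]
    exact hc' _
  · by_cases hb : t.InSubtree i b
    · obtain rfl := eq_of_mem_edges_of_inSubtree h ha hb
      rw [graft, graft, if_neg ha, if_pos hb, Nat.sub_self, show t.depth a = p by omega]
      exact hlink
    · rw [graft, graft, if_neg ha, if_neg hb, hd]
      exact hc _

def DistinguishesDepths (E : V → V → Prop) : Prop :=
  ∀ p q : ℕ, p ≠ q → ∃ c c' : ℕ → V,
    IsWalk E c ∧ IsWalk E c' ∧ E (c p) (c' 0) ∧ ¬ E (c q) (c' 0)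

/-- `x_i` is the first vertex whose depths in `t` and `t'` differ; its parent in `t'` lies
outside the grafted subtree, at depth `t'.depth i - 1` in `t` as well. -/
theorem exists_isHom_not_isHom (hE : DistinguishesDepths E) {t t' : BTree}
    (hs : t.size = t'.size) (hne : t ≠ t') : ∃ g : ℕ → V, IsHom E g t 0 ∧ ¬ IsHom E g t' 0 := by
  obtain ⟨i, hi₀, hit, hdi, hagree⟩ := exists_min_depth_ne hs hne
  have hp := depth_pos hi₀ hit
  have hq := depth_pos hi₀ (hs ▸ hit)
  obtain ⟨c, c', hc, hc', hlink, hsep⟩ := hE (t.depth i - 1) (t'.depth i - 1) (by omega)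
  refine ⟨graft t i c c', isHom_graft hc hc' (by omega) hlink, fun hg => hsep ?_⟩
  obtain ⟨a, ha⟩ := exists_mem_edgesFrom (t := t') hi₀ (by omega)
  have hai : a < i := (bounds_of_mem_edgesFrom ha).2.1
  have hda : t.depth a = t'.depth i - 1 := by
    have := depth_snd_of_mem_edges ha
    rw [hagree a hai]
    omega
  have hna : ¬ t.InSubtree i a := fun h => absurd h.1 (not_le.2 hai)
  have hedge := hg a i ha
  rwa [graft, graft, if_neg hna, if_pos (inSubtree_self t i), Nat.sub_self, hda] at hedge

theorem not_satisfies_gaOp (hE : DistinguishesDepths E) {t t' : BTree} (hs : t.size = t'.size)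
    (hne : t ≠ t') : ¬ Satisfies (gaOp E) t t' := by
  obtain ⟨g, hg, hg'⟩ := exists_isHom_not_isHom hE hs hne
  intro h
  have := h fun j => some (g j)
  rw [termOp, termOp, evalFrom_gaOp_some, evalFrom_gaOp_some, if_pos hg, if_neg hg'] at this
  exact Option.some_ne_none _ this

end GraphAlgebra

theorem spectrum_eq_catalan {A : Type*} {op : A → A → A}
    (h : ∀ t t' : BTree, t.size = t'.size → t ≠ t' → ¬ Satisfies op t t') {n : ℕ} (hn : 1 ≤ n) :
    spectrum op n = catalan (n - 1) := by
  have hinj : Function.Injective fun t : {t : BTree // t.size = n} => t.1.termOp op :=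
    fun t t' htt' => by_contra fun hne =>
      h t t' (t.2.trans t'.2.symm) (fun heq => hne (Subtype.ext heq)) (congrFun htt')
  have hrange : {g | ∃ t : BTree, t.size = n ∧ g = t.termOp op} =
      Set.range fun t : {t : BTree // t.size = n} => t.1.termOp op := by
    ext g
    simp [eq_comm]
  rw [spectrum, hrange, Set.ncard_range_of_injective hinj, BTree.card_size_eq hn]

section Walks

variable {V : Type*} {E : V → V → Prop} [Std.Symm E]

theorem isWalk_alternate {u v : V} (h : E u v) (p : ℕ) :
    IsWalk E (fun k => if Even (k + p) then u else v) := by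
  intro k
  simp only [add_right_comm k 1 p, Nat.even_add_one]
  by_cases hk : Even (k + p) <;> simp [hk, h, symm h]

/-- Run back and forth along `u — x` up to time `p`, then along `x — w`. -/
theorem exists_isWalk_of_adj_adj {u x w : V} (hux : E u x) (hxw : E x w)
    {p q : ℕ} (hpq : p < q) (hpar : Even (p + q)) : ∃ c, IsWalk E c ∧ c p = u ∧ c q = w := by
  have hp : Even (p + p) := ⟨p, rfl⟩
  have hp' : ¬ Even (p + 1 + p) := by rw [add_right_comm, Nat.even_add_one]; exact not_not.2 hp
  refine ⟨_, (isWalk_alternate hux p).splice (isWalk_alternate (symm hxw) p) (p := p) ?_,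
    ?_, ?_⟩ <;> simp [hp, hp', hpq.not_ge, add_comm q p, hpar, hux]

/-- `c` goes from `a` at time `p` to `b` at time `q` along `a — x — b` when `p ≡ q [MOD 2]`, and
along `a — b` otherwise; `c'` runs back and forth along `z — a`. -/
theorem distinguishesDepths_of_not_adj (h₂ : ∃ z a b, E z a ∧ E a b ∧ ¬ E z b)
    (h₃ : ∃ z a x b, E z a ∧ E a x ∧ E x b ∧ ¬ E z b) : DistinguishesDepths E := by
  intro p q hpq
  suffices ∃ z c, IsWalk E c ∧ E z (c p) ∧ ¬ E z (c q) by
    obtain ⟨z, c, hc, hzp, hzq⟩ := this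
    exact ⟨c, _, hc, isWalk_alternate hzp 0, by simpa using symm hzp,
      by simpa using fun h => hzq (symm h)⟩
  rcases Nat.even_or_odd (p + q) with hpar | hpar
  · obtain ⟨z, a, x, b, hza, hax, hxb, hzb⟩ := h₃
    rcases hpq.lt_or_gt with hlt | hlt
    · obtain ⟨c, hc, hcp, hcq⟩ := exists_isWalk_of_adj_adj hax hxb hlt hpar
      exact ⟨z, c, hc, hcp ▸ hza, hcq ▸ hzb⟩
    · obtain ⟨c, hc, hcq, hcp⟩ :=
        exists_isWalk_of_adj_adj (symm hxb) (symm hax) hlt (by rwa [add_comm])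
      exact ⟨z, c, hc, hcp ▸ hza, hcq ▸ hzb⟩
  · obtain ⟨z, a, b, hza, hab, hzb⟩ := h₂
    have hq : ¬ Even (q + p) := by rw [add_comm]; exact Nat.not_even_iff_odd.2 hpar
    exact ⟨z, _, isWalk_alternate hab p, by simp [hza, show Even (p + p) from ⟨p, rfl⟩],
      by simp [hq, hzb]⟩

end Walks

section Components

variable {V : Type*} {E : V → V → Prop} {v : V}

theorem reach_of_mem_scc {x y : V} (hx : x ∈ scc E v) (hy : y ∈ scc E v) : Reach E x y :=
  Relation.ReflTransGen.trans hx.1 hy.2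

theorem exists_adj_of_mem_scc (hv : ¬ (scc E v = {v} ∧ ¬ E v v)) {u : V} (hu : u ∈ scc E v) :
    ∃ w, E u w := by
  rcases Relation.ReflTransGen.cases_head hu.1 with rfl | ⟨w, hw, -⟩
  · by_contra! hadj
    refine hv ⟨Set.eq_singleton_iff_unique_mem.2 ⟨hu, fun w hw => ?_⟩, hadj u⟩
    rcases Relation.ReflTransGen.cases_head hw.2 with h | ⟨w', h, -⟩
    · exact h.symm
    · exact absurd h (hadj w')
  · exact ⟨w, hw⟩

variable [Std.Symm E]

/-- A transitive symmetric relation is complete with loops on each nontrivial component. -/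
theorem exists_walk_two_not_adj (hv₁ : ¬ (scc E v = {v} ∧ ¬ E v v))
    (hv₂ : ¬ ∀ x ∈ scc E v, ∀ y ∈ scc E v, E x y) : ∃ z a b, E z a ∧ E a b ∧ ¬ E z b := by
  by_contra! htrans
  refine hv₂ fun x hx y hy => ?_
  obtain ⟨w, hw⟩ := exists_adj_of_mem_scc hv₁ hx
  have hxy := reach_of_mem_scc hx hy
  clear hy
  induction hxy with
  | refl => exact htrans x w x hw (symm hw)
  | tail _ hbc ih => exact htrans _ _ _ ih hbc

theorem adj_of_reach_of_adj_self (h₃ : ∀ z a x b : V, E z a → E a x → E x b → E z b) {x y : V}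
    (hx : E x x) (h : Reach E x y) : E x y ∧ E y y := by
  induction h with
  | refl => exact ⟨hx, hx⟩
  | tail _ hby ih => exact ⟨h₃ _ _ _ _ ih.1 ih.2 hby, h₃ _ _ _ _ (symm hby) ih.2 hby⟩

theorem isCompleteBipartiteOn_of_loopless (h₃ : ∀ z a x b : V, E z a → E a x → E x b → E z b)
    (hv : ¬ (scc E v = {v} ∧ ¬ E v v)) (hloop : ∀ u ∈ scc E v, ¬ E u u) :
    IsCompleteBipartiteOn E (scc E v) := by
  have hvK : v ∈ scc E v := ⟨.refl, .refl⟩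
  obtain ⟨q, hvq⟩ := exists_adj_of_mem_scc hv hvK
  have hqK : q ∈ scc E v := ⟨.single (symm hvq), .single hvq⟩
  have cover : ∀ u, Reach E v u → E q u ∨ E v u := by
    intro u hu
    induction hu with
    | refl => exact Or.inl (symm hvq)
    | tail _ hbu ih =>
      rcases ih with hqb | hvb
      · exact Or.inr (h₃ _ _ _ _ hvq hqb hbu)
      · exact Or.inl (h₃ _ _ _ _ (symm hvq) hvb hbu)
  refine ⟨{u | u ∈ scc E v ∧ E q u}, {u | u ∈ scc E v ∧ E v u}, ⟨v, hvK, symm hvq⟩,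
    ⟨q, hqK, hvq⟩, ?_, ?_, fun x hx y hy => ⟨fun hxy => ?_, ?_⟩⟩
  · ext u
    refine ⟨by rintro (⟨hu, -⟩ | ⟨hu, -⟩) <;> exact hu, fun hu => ?_⟩
    rcases cover u hu.2 with h | h
    · exact Or.inl ⟨hu, h⟩
    · exact Or.inr ⟨hu, h⟩
  · refine Set.eq_empty_iff_forall_notMem.2 fun u ⟨⟨hu, hqu⟩, _, hvu⟩ => ?_
    exact hloop u hu (h₃ _ _ _ _ (symm hqu) (symm hvq) hvu)
  · rcases cover x hx.2 with hqx | hvx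
    · exact Or.inl ⟨⟨hx, hqx⟩, hy, h₃ _ _ _ _ hvq hqx hxy⟩
    · exact Or.inr ⟨⟨hx, hvx⟩, hy, h₃ _ _ _ _ (symm hvq) hvx hxy⟩
  · rintro (⟨⟨-, hqx⟩, -, hvy⟩ | ⟨⟨-, hvx⟩, -, hqy⟩)
    · exact h₃ _ _ _ _ (symm hqx) (symm hvq) hvy
    · exact h₃ _ _ _ _ (symm hvx) hvq hqy

/-- If every walk of length three closes up, a component is complete with loops as soon as it
has one loop, and complete bipartite if it has none. -/
theorem exists_walk_three_not_adj (hv₁ : ¬ (scc E v = {v} ∧ ¬ E v v))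
    (hv₂ : ¬ ∀ x ∈ scc E v, ∀ y ∈ scc E v, E x y)
    (hv₃ : ¬ IsCompleteBipartiteOn E (scc E v)) : ∃ z a x b, E z a ∧ E a x ∧ E x b ∧ ¬ E z b := by
  by_contra! h₃
  by_cases hloop : ∃ ω ∈ scc E v, E ω ω
  · obtain ⟨ω, hω, hωω⟩ := hloop
    refine hv₂ fun x hx y hy => ?_
    have hxx := (adj_of_reach_of_adj_self h₃ hωω (reach_of_mem_scc hω hx)).2
    exact (adj_of_reach_of_adj_self h₃ hxx (reach_of_mem_scc hx hy)).1
  · exact hv₃ (isCompleteBipartiteOn_of_loopless h₃ hv₁ fun u hu huu => hloop ⟨u, hu, huu⟩)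

end Components

end AssocSpec

open AssocSpec in
theorem stmt2_general {V : Type*} (E : V → V → Prop)
    (hsymm : ∀ u v, E u v → E v u)
    (hbad : ∃ v : V,
      ¬ (scc E v = {v} ∧ ¬ E v v) ∧
      ¬ (∀ x ∈ scc E v, ∀ y ∈ scc E v, E x y) ∧
      ¬ IsCompleteBipartiteOn E (scc E v)) :
    (∀ t t' : BTree, t.size = t'.size → t ≠ t' → ¬ Satisfies (gaOp E) t t') ∧
    (∀ n : ℕ, 1 ≤ n → spectrum (gaOp E) n = catalan (n - 1)) := by
  obtain ⟨v, hv₁, hv₂, hv₃⟩ := hbad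
  have : Std.Symm E := ⟨hsymm⟩
  have hE : DistinguishesDepths E := distinguishesDepths_of_not_adj
    (exists_walk_two_not_adj hv₁ hv₂) (exists_walk_three_not_adj hv₁ hv₂ hv₃)
  have hfree : ∀ t t' : BTree, t.size = t'.size → t ≠ t' → ¬ Satisfies (gaOp E) t t' :=
    fun _ _ => not_satisfies_gaOp hE
  exact ⟨hfree, fun _ => spectrum_eq_catalan hfree⟩

open AssocSpec in
/-- If an undirected graph `G` has a connected component that
is neither trivial, nor a complete graph with loops, nor complete bipartite,
then `A(G)` satisfies no nontrivial bracketing identity; consequently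
`s_n(A(G)) = C_{n-1}` (Catalan number) for all `n ≥ 1`. -/
theorem stmt2 {V : Type*} [Nonempty V] (E : V → V → Prop)
    (hsymm : ∀ u v, E u v → E v u)
    (hbad : ∃ v : V,
      ¬ (scc E v = {v} ∧ ¬ E v v) ∧
      ¬ (∀ x ∈ scc E v, ∀ y ∈ scc E v, E x y) ∧
      ¬ IsCompleteBipartiteOn E (scc E v)) :
    (∀ t t' : BTree, t.size = t'.size → t ≠ t' → ¬ Satisfies (gaOp E) t t') ∧
    (∀ n : ℕ, 1 ≤ n → spectrum (gaOp E) n = catalan (n - 1)) :=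
  stmt2_general E hsymm hbad
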